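/- The TSP polytope 𝒫ₙ is contained in the projection of Q̄₁ onto the y-variables: 𝒫ₙ ⊆ { y : ∃ w ∈ ℝ^{m×m}, (w,y) ∈ Q̄₁ }. -/

import Mathlib

/-- The assignment (Birkhoff) polytope `𝒜ₙ` (with `m = n - 1`): the set of
`m × m` doubly stochastic matrices.  Index `i : Fin m` stands for city `i+1`
(a city in `{1,…,m}`), index `r : Fin m` for stage/position `r+1`. -/
def assignmentPolytope (m : ℕ) : Set (Fin m → Fin m → ℝ) :=
  {w | (∀ i, ∑ r, w i r = 1) ∧ (∀ r, ∑ i, w i r = 1) ∧ ∀ i r, 0 ≤ w i r}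

/-- The polytope `Q̄₁`.  Cities are `Fin (m+1)` (city `0` is the depot, and
`i.succ : Fin (m+1)` is city `i+1` for `i : Fin m`).  The `y`-variables are
indexed by ordered pairs of distinct cities; the (nonexistent) diagonal
entries are pinned to `0`. -/
def Qbar1 (m : ℕ) :
    Set ((Fin m → Fin m → ℝ) × (Fin (m + 1) → Fin (m + 1) → ℝ)) :=
  {p |
    p.1 ∈ assignmentPolytope m ∧
    (∀ i, p.2 i i = 0) ∧
    (∀ i r : Fin m, r.val = 0 → p.2 0 i.succ = p.1 i r) ∧
    (∀ i r : Fin m, r.val = m - 1 → p.2 i.succ 0 = p.1 i r) ∧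
    (∀ i j r r' : Fin m, i ≠ j → r'.val = r.val + 1 →
      p.1 i r + p.1 j r' - p.2 i.succ j.succ ≤ 1) ∧
    (∑ i : Fin m, ∑ j : Fin m, if i = j then 0 else p.2 i.succ j.succ) = (m : ℝ) - 1 ∧
    (∀ i j, 0 ≤ p.2 i j)}

/-- The permutation matrix `ŵ` of a permutation `u` of `{1,…,m}`:
`ŵ_{ir} = 1` iff city `i+1` is visited at stage `r+1`, i.e. iff `i = u r`. -/
def permMatrix (m : ℕ) (u : Equiv.Perm (Fin m)) : Fin m → Fin m → ℝ :=
  fun i r => if i = u r then 1 else 0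

/-- The tour incidence vector `ȳ^u` of a permutation `u` of `{1,…,m}`:
`ȳ^u_{0,u(1)} = 1`, `ȳ^u_{u(m),0} = 1`, `ȳ^u_{u(q),u(q+1)} = 1` for
`q = 1,…,m−1`, and all other entries are `0`. -/
def tourVec (m : ℕ) (u : Equiv.Perm (Fin m)) : Fin (m + 1) → Fin (m + 1) → ℝ :=
  fun a b =>
    if (∃ r : Fin m, r.val = 0 ∧ a = 0 ∧ b = (u r).succ) ∨
        (∃ r : Fin m, r.val = m - 1 ∧ a = (u r).succ ∧ b = 0) ∨
        (∃ q q' : Fin m, q'.val = q.val + 1 ∧ a = (u q).succ ∧ b = (u q').succ)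
    then 1 else 0

/-- "The TSP polytope" `𝒫ₙ` (with `m = n - 1`): the convex hull of the tour
incidence vectors. -/
def tspPolytope (m : ℕ) : Set (Fin (m + 1) → Fin (m + 1) → ℝ) :=
  convexHull ℝ {y | ∃ u : Equiv.Perm (Fin m), y = tourVec m u}

/-- The cost `d(0,u(1)) + Σ_{q=1}^{m−1} d(u(q),u(q+1)) + d(u(m),0)` of the TSP
tour `0 → u(1) → … → u(m) → 0` associated with a permutation `u` of `{1,…,m}`. -/
def tourCost (m : ℕ) (d : Fin (m + 1) → Fin (m + 1) → ℝ) (u : Equiv.Perm (Fin m)) : ℝ :=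
  (∑ r : Fin m, if r.val = 0 then d 0 ((u r).succ) else 0) +
  (∑ q : Fin m, ∑ q' : Fin m, if q'.val = q.val + 1 then d ((u q).succ) ((u q').succ) else 0) +
  (∑ r : Fin m, if r.val = m - 1 then d ((u r).succ) 0 else 0)

/-!
Every tour vector `ȳ^u` lifts to `Q̄₁` with the permutation matrix of `u` as its `w`-part.
Since `Q̄₁` is cut out by linear equations and inequalities it is convex, hence so is its
projection to the `y`-variables, which therefore contains the convex hull `𝒫ₙ` of the
tour vectors.
-/

open Finset

lemma sum_sum_ite_val_eq_val_add_one (R : Type*) [AddCommMonoidWithOne R] (m : ℕ) :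
    ∑ q : Fin m, ∑ q' : Fin m, (if q'.val = q.val + 1 then (1 : R) else 0) =
      ((m - 1 : ℕ) : R) := by
  cases m with
  | zero => simp
  | succ k =>
    have hsucc (p : Fin k) :
        ∑ q : Fin (k + 1), (if p.succ.val = q.val + 1 then (1 : R) else 0) = 1 := by
      have hiff (q : Fin (k + 1)) : p.succ.val = q.val + 1 ↔ p.castSucc = q := by
        simp [Fin.ext_iff]
      simp only [hiff, sum_ite_eq, mem_univ, if_true]
    rw [sum_comm, Fin.sum_univ_succ]
    simp only [Fin.val_zero, hsucc]
    simp

section Tour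

variable {m : ℕ} (u : Equiv.Perm (Fin m))

lemma permMatrix_nonneg (i r : Fin m) : 0 ≤ permMatrix m u i r := by
  unfold permMatrix; split <;> norm_num

lemma permMatrix_le_one (i r : Fin m) : permMatrix m u i r ≤ 1 := by
  unfold permMatrix; split <;> norm_num

lemma permMatrix_mem_assignmentPolytope : permMatrix m u ∈ assignmentPolytope m := by
  refine ⟨fun i => ?_, fun r => ?_, permMatrix_nonneg u⟩
  · simp [permMatrix, ← Equiv.symm_apply_eq]
  · simp [permMatrix]

lemma tourVec_nonneg (a b : Fin (m + 1)) : 0 ≤ tourVec m u a b := by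
  unfold tourVec; split <;> norm_num

lemma tourVec_succ_succ (q q' : Fin m) :
    tourVec m u (u q).succ (u q').succ = if q'.val = q.val + 1 then 1 else 0 := by
  simp [tourVec]

lemma tourVec_self (a : Fin (m + 1)) : tourVec m u a a = 0 := by
  cases a using Fin.cases with
  | zero => simp [tourVec, eq_comm (a := (0 : Fin (m + 1)))]
  | succ i =>
    obtain ⟨q, rfl⟩ := u.surjective i
    simp [tourVec_succ_succ]

lemma tourVec_zero_succ (i : Fin m) {r : Fin m} (hr : r.val = 0) :
    tourVec m u 0 i.succ = permMatrix m u i r := by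
  simp only [tourVec, permMatrix, ← hr, Fin.val_inj, exists_eq_left]
  simp [eq_comm (a := (0 : Fin (m + 1)))]

lemma tourVec_succ_zero (i : Fin m) {r : Fin m} (hr : r.val = m - 1) :
    tourVec m u i.succ 0 = permMatrix m u i r := by
  simp only [tourVec, permMatrix, ← hr, Fin.val_inj, exists_eq_left]
  simp [eq_comm (a := (0 : Fin (m + 1)))]

lemma permMatrix_add_le_one_add_tourVec (i j : Fin m) {r r' : Fin m}
    (hr : r'.val = r.val + 1) :
    permMatrix m u i r + permMatrix m u j r' ≤ 1 + tourVec m u i.succ j.succ := by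
  by_cases hi : i = u r
  · by_cases hj : j = u r'
    · subst hi hj
      simp [permMatrix, tourVec_succ_succ, hr]
    · have hj0 : permMatrix m u j r' = 0 := if_neg hj
      linarith [permMatrix_le_one u i r, tourVec_nonneg u i.succ j.succ]
  · have hi0 : permMatrix m u i r = 0 := if_neg hi
    linarith [permMatrix_le_one u j r', tourVec_nonneg u i.succ j.succ]

lemma sum_offDiag_tourVec :
    ∑ i : Fin m, ∑ j : Fin m, (if i = j then 0 else tourVec m u i.succ j.succ) =
      ((m - 1 : ℕ) : ℝ) := by
  calc ∑ i : Fin m, ∑ j : Fin m, (if i = j then 0 else tourVec m u i.succ j.succ)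
      = ∑ i : Fin m, ∑ j : Fin m, tourVec m u i.succ j.succ := by
        refine sum_congr rfl fun i _ => sum_congr rfl fun j _ => ?_
        split_ifs with hij
        · rw [hij, tourVec_self]
        · rfl
    _ = ∑ q : Fin m, ∑ q' : Fin m, tourVec m u (u q).succ (u q').succ := by
        rw [← Equiv.sum_comp u]
        exact sum_congr rfl fun q _ => (Equiv.sum_comp u _).symm
    _ = ((m - 1 : ℕ) : ℝ) := by
        simp only [tourVec_succ_succ, sum_sum_ite_val_eq_val_add_one]

lemma permMatrix_tourVec_mem_Qbar1 (hm : 1 ≤ m) : (permMatrix m u, tourVec m u) ∈ Qbar1 m :=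
  ⟨permMatrix_mem_assignmentPolytope u, tourVec_self u,
    fun i _ hr => tourVec_zero_succ u i hr, fun i _ hr => tourVec_succ_zero u i hr,
    fun i j _ _ _ hr => by linarith [permMatrix_add_le_one_add_tourVec u i j hr],
    by rw [sum_offDiag_tourVec, Nat.cast_sub hm, Nat.cast_one], tourVec_nonneg u⟩

end Tour

lemma convex_Qbar1 (m : ℕ) : Convex ℝ (Qbar1 m) := by
  rintro ⟨w₁, y₁⟩ ⟨⟨hrow₁, hcol₁, hw₁⟩, hdiag₁, hfirst₁, hlast₁, hlink₁, hsum₁, hy₁⟩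
    ⟨w₂, y₂⟩ ⟨⟨hrow₂, hcol₂, hw₂⟩, hdiag₂, hfirst₂, hlast₂, hlink₂, hsum₂, hy₂⟩ a b ha hb hab
  dsimp only at *
  have hoffDiag (i j : Fin m) :
      (if i = j then 0 else a * y₁ i.succ j.succ + b * y₂ i.succ j.succ) =
        a * (if i = j then 0 else y₁ i.succ j.succ) +
          b * (if i = j then 0 else y₂ i.succ j.succ) := by
    split_ifs <;> ring
  refine ⟨⟨fun i => ?_, fun r => ?_, fun i r => ?_⟩, fun i => ?_, fun i r hr => ?_,
    fun i r hr => ?_, fun i j r r' hij hr => ?_, ?_, fun i j => ?_⟩ <;>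
    simp only [Prod.smul_mk, Prod.mk_add_mk, Pi.add_apply, Pi.smul_apply, smul_eq_mul]
  · rw [sum_add_distrib, ← mul_sum, ← mul_sum, hrow₁, hrow₂, mul_one, mul_one, hab]
  · rw [sum_add_distrib, ← mul_sum, ← mul_sum, hcol₁, hcol₂, mul_one, mul_one, hab]
  · exact add_nonneg (mul_nonneg ha (hw₁ i r)) (mul_nonneg hb (hw₂ i r))
  · rw [hdiag₁, hdiag₂, mul_zero, mul_zero, add_zero]
  · rw [hfirst₁ i r hr, hfirst₂ i r hr]
  · rw [hlast₁ i r hr, hlast₂ i r hr]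
  · nlinarith [hlink₁ i j r r' hij hr, hlink₂ i j r r' hij hr]
  · simp only [hoffDiag, sum_add_distrib, ← mul_sum, hsum₁, hsum₂]
    linear_combination ((m : ℝ) - 1) * hab
  · exact add_nonneg (mul_nonneg ha (hy₁ i j)) (mul_nonneg hb (hy₂ i j))

/-- The TSP polytope `𝒫ₙ` is contained in the projection of
`Q̄₁` onto the `y`-variables. -/
theorem tspPolytope_subset_proj_Qbar1 (n : ℕ) (hn : 3 ≤ n) :
    tspPolytope (n - 1) ⊆
      {y : Fin (n - 1 + 1) → Fin (n - 1 + 1) → ℝ |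
        ∃ w : Fin (n - 1) → Fin (n - 1) → ℝ, (w, y) ∈ Qbar1 (n - 1)} := by
  refine convexHull_min ?_ ?_
  · rintro _ ⟨u, rfl⟩
    exact ⟨permMatrix (n - 1) u, permMatrix_tourVec_mem_Qbar1 u (by omega)⟩
  · rintro y₁ ⟨w₁, h₁⟩ y₂ ⟨w₂, h₂⟩ a b ha hb hab
    exact ⟨a • w₁ + b • w₂, convex_Qbar1 (n - 1) h₁ h₂ ha hb hab⟩
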